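/- arXiv:math/0504068 — 6 statements merged into one kernel-verified Lean document; each statement's English description precedes it below -/
import Mathlib

section
/- Let R be a ring and let a, c be elements of R. If the element b = a - a*c*a is von Neumann regular (i.e., there exists d in R with b = b*d*b), then a is von Neumann regular. -/
open MulOpposite in
/-- Right ideals of `R`, as submodules of `R` over `Rᵐᵒᵖ`. -/
abbrev RIdeal (R : Type*) [Ring R] := Submodule Rᵐᵒᵖ R

section Defs
variable (R : Type*) [Ring R]

/-- Left annihilator of a subset. -/
def lAnn (X : Set R) : Set R := {a | ∀ x ∈ X, a * x = 0}

/-- Right annihilator of a subset. -/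
def rAnn (X : Set R) : Set R := {a | ∀ x ∈ X, x * a = 0}

/-- Right annihilator of a subset, as a right ideal. -/
def rAnnI (X : Set R) : RIdeal R where
  carrier := rAnn R X
  add_mem' := by intro a b ha hb x hx; rw [mul_add, ha x hx, hb x hx, add_zero]
  zero_mem' := by intro x hx; rw [mul_zero]
  smul_mem' := by
    intro c a ha x hx
    show x * (a * c.unop) = 0
    rw [← mul_assoc, ha x hx, zero_mul]

/-- `R` is left P-injective: `rl(a) = aR` for every `a`. -/
def IsLeftPInjective : Prop :=
  ∀ a x : R, (∀ u : R, u * a = 0 → u * x = 0) ↔ ∃ s : R, x = a * s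

/-- `R` is left 2-injective. -/
def IsLeft2Injective : Prop :=
  ∀ (a b : R) (f : ↥(Submodule.span R ({a, b} : Set R)) →ₗ[R] R),
    ∃ g : R →ₗ[R] R, ∀ x : ↥(Submodule.span R ({a, b} : Set R)), g (x : R) = f x

/-- `R` is left FP-injective: every matrix ring over `R` is left P-injective. -/
def IsLeftFPInjective : Prop :=
  ∀ n : ℕ, IsLeftPInjective (Matrix (Fin n) (Fin n) R)

/-- A left ideal is small if `K + I = R` implies `K = R`. -/
def IsSmallLeftIdeal (I : Ideal R) : Prop := ∀ K : Ideal R, K ⊔ I = ⊤ → K = ⊤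

/-- A complement left ideal: maximal with respect to intersecting some left ideal trivially. -/
def IsComplementLeftIdeal (C : Ideal R) : Prop :=
  ∃ S : Ideal R, C ⊓ S = ⊥ ∧ ∀ C' : Ideal R, C ≤ C' → C' ⊓ S = ⊥ → C' = C

/-- A right ideal is essential in `R`. -/
def IsEssentialRIdeal (I : RIdeal R) : Prop := ∀ K : RIdeal R, K ⊓ I = ⊥ → K = ⊥

/-- The right socle: the sum of all simple (minimal) right ideals. -/
def rSocle : RIdeal R := sSup {m : RIdeal R | IsSimpleModule Rᵐᵒᵖ m}

/-- The right singular ideal. -/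
def rSingular : Set R := {a | IsEssentialRIdeal R (rAnnI R {a})}

/-- ACC on right annihilators. -/
def ACCOnRightAnnihilators : Prop :=
  ∀ f : ℕ → Set R, (∀ n, ∃ X : Set R, f n = rAnn R X) → (∀ n, f n ⊆ f (n + 1)) →
    ∃ n, ∀ m, n ≤ m → f m = f n

/-- The Jacobson radical, as a set. -/
def jacobsonSet : Set R := (TwoSidedIdeal.jacobson (⊥ : TwoSidedIdeal R) : Set R)

/-- A subset is nilpotent if products of some fixed length of its elements vanish. -/
def IsNilpotentSet (J : Set R) : Prop :=
  ∃ n : ℕ, ∀ f : Fin (n + 1) → R, (∀ i, f i ∈ J) → (List.ofFn f).prod = 0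

/-- `R` is quasi-Frobenius: left noetherian and left self-injective. -/
def IsQuasiFrobenius : Prop := IsNoetherianRing R ∧ Module.Injective R R

/-- `R` is right mininjective. -/
def IsRightMininjective : Prop :=
  ∀ (I : RIdeal R), IsSimpleModule Rᵐᵒᵖ I → ∀ f : I →ₗ[Rᵐᵒᵖ] R,
    ∃ c : R, ∀ x : I, f x = c * (x : R)

/-- `R` is left mininjective. -/
def IsLeftMininjective : Prop :=
  ∀ (I : Ideal R), IsSimpleModule R I → ∀ f : I →ₗ[R] R,
    ∃ c : R, ∀ x : I, f x = (x : R) * c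

/-- `R` is right simple injective. -/
def IsRightSimpleInjective : Prop :=
  ∀ (I : RIdeal R) (f : I →ₗ[Rᵐᵒᵖ] R), IsSimpleModule Rᵐᵒᵖ (LinearMap.range f) →
    ∃ c : R, ∀ x : I, f x = c * (x : R)

/-- `R` is left CS: every left ideal is essential in a direct summand of `R`. -/
def IsLeftCS : Prop :=
  ∀ I : Ideal R, ∃ K : Ideal R, (∃ K' : Ideal R, IsCompl K K') ∧ I ≤ K ∧
    ∀ L : Ideal R, L ≤ K → L ⊓ I = ⊥ → L = ⊥

/-- `R` is left min-CS: every minimal left ideal is essential in a direct summand. -/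
def IsLeftMinCS : Prop :=
  ∀ I : Ideal R, IsSimpleModule R I → ∃ K : Ideal R, (∃ K' : Ideal R, IsCompl K K') ∧ I ≤ K ∧
    ∀ L : Ideal R, L ≤ K → L ⊓ I = ⊥ → L = ⊥

/-- `R` is right Johns: right noetherian and every right ideal is a right annihilator. -/
def IsRightJohns : Prop :=
  IsNoetherianRing Rᵐᵒᵖ ∧ ∀ I : RIdeal R, ∃ X : Set R, (I : Set R) = rAnn R X

end Defs

section MoreDefs
variable (R : Type*) [Ring R]

/-- Left annihilator of a subset, as a left ideal. -/
def lAnnI (X : Set R) : Ideal R where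
  carrier := lAnn R X
  add_mem' := by intro a b ha hb x hx; rw [add_mul, ha x hx, hb x hx, add_zero]
  zero_mem' := by intro x hx; rw [zero_mul]
  smul_mem' := by
    intro c a ha x hx
    show c * a * x = 0
    rw [mul_assoc, ha x hx, mul_zero]

/-- A left ideal is essential in `R`. -/
def IsEssentialLIdeal (I : Ideal R) : Prop := ∀ K : Ideal R, K ⊓ I = ⊥ → K = ⊥

/-- The left singular ideal `Z_l`. -/
def lSingular : Set R := {a | IsEssentialLIdeal R (lAnnI R {a})}

end MoreDefs

/-- If `b = a - a*c*a` is von Neumann regular, then so is `a`. -/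
theorem stmt0 {R : Type*} [Ring R] (a c : R)
    (h : ∃ d : R, a - a * c * a = (a - a * c * a) * d * (a - a * c * a)) :
    ∃ y : R, a = a * y * a := by
  obtain ⟨d, hd⟩ := h
  refine ⟨c + (1 - c * a) * d * (1 - a * c), ?_⟩
  have : a * (c + (1 - c * a) * d * (1 - a * c)) * a
      = a * c * a + (a - a * c * a) * d * (a - a * c * a) := by noncomm_ring
  rw [this, ← hd]; noncomm_ring
end

section
/- If R is a right noetherian and left P-injective ring, then the Jacobson radical J(R) equals the right annihilator of the left annihilator of J(R), i.e., J(R) = rl(J(R)). -/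
section Proof

variable {R : Type*} [Ring R]

lemma mem_lAnnI' {X : Set R} {u : R} : u ∈ lAnnI R X ↔ ∀ x ∈ X, u * x = 0 := Iff.rfl

lemma mem_lAnnI_singleton {a u : R} : u ∈ lAnnI R {a} ↔ u * a = 0 := by
  constructor
  · intro h; exact h a rfl
  · intro h x hx; rw [Set.mem_singleton_iff] at hx; rw [hx]; exact h

lemma ess_mono {I I' : Ideal R} (h : I ≤ I') (hI : IsEssentialLIdeal R I) :
    IsEssentialLIdeal R I' := fun K hK =>
  hI K (le_bot_iff.mp ((inf_le_inf_left K h).trans hK.le))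

lemma ess_inf {I I' : Ideal R} (hI : IsEssentialLIdeal R I) (hI' : IsEssentialLIdeal R I') :
    IsEssentialLIdeal R (I ⊓ I') := by
  intro K hK
  have h1 : (K ⊓ I) ⊓ I' = ⊥ := by rw [inf_assoc]; exact hK
  exact hI K (hI' (K ⊓ I) h1)

lemma ess_top : IsEssentialLIdeal R (⊤ : Ideal R) := by
  intro K hK; rwa [inf_top_eq] at hK

lemma ess_finset_inf {ι : Type*} {S : Finset ι} {f : ι → Ideal R}
    (h : ∀ x ∈ S, IsEssentialLIdeal R (f x)) : IsEssentialLIdeal R (S.inf f) := by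
  classical
  induction S using Finset.induction_on with
  | empty => rw [Finset.inf_empty]; exact ess_top
  | @insert a S ha ih =>
    rw [Finset.inf_insert]
    exact ess_inf (h a (Finset.mem_insert_self a S))
      (ih fun x hx => h x (Finset.mem_insert_of_mem hx))

lemma mem_jacobsonSet {a : R} :
    a ∈ jacobsonSet R ↔ ∀ y : R, ∃ z : R, z * y * a + z = 1 := by
  have : a ∈ jacobsonSet R ↔ a ∈ TwoSidedIdeal.jacobson (⊥ : TwoSidedIdeal R) := Iff.rfl
  rw [this, TwoSidedIdeal.mem_jacobson_iff]
  constructor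
  · intro h y
    obtain ⟨z, hz⟩ := h y
    rw [TwoSidedIdeal.mem_bot, sub_eq_zero] at hz
    exact ⟨z, hz⟩
  · intro h y
    obtain ⟨z, hz⟩ := h y
    exact ⟨z, by rw [TwoSidedIdeal.mem_bot, sub_eq_zero]; exact hz⟩

lemma jacobsonSet_mul_right {a : R} (ha : a ∈ jacobsonSet R) (r : R) :
    a * r ∈ jacobsonSet R :=
  TwoSidedIdeal.mul_mem_right _ _ _ ha

lemma jacobsonSet_mul_left {a : R} (ha : a ∈ jacobsonSet R) (r : R) :
    r * a ∈ jacobsonSet R :=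
  TwoSidedIdeal.mul_mem_left _ _ _ ha

lemma jacobsonSet_neg {a : R} (ha : a ∈ jacobsonSet R) : -a ∈ jacobsonSet R :=
  TwoSidedIdeal.neg_mem _ ha

lemma jacobsonSet_zero : (0 : R) ∈ jacobsonSet R :=
  TwoSidedIdeal.zero_mem _

lemma jacobsonSet_add {a b : R} (ha : a ∈ jacobsonSet R) (hb : b ∈ jacobsonSet R) :
    a + b ∈ jacobsonSet R :=
  TwoSidedIdeal.add_mem _ ha hb

/-- For `x` in the Jacobson radical, `1 + x` is a (two-sided) unit. -/
lemma one_add_unit_of_mem_jac {x : R} (hx : x ∈ jacobsonSet R) :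
    ∃ z : R, (1 + x) * z = 1 ∧ z * (1 + x) = 1 := by
  have key : ∀ w ∈ jacobsonSet R, ∃ z : R, z * (1 + w) = 1 := by
    intro w hw
    obtain ⟨z, hz⟩ := mem_jacobsonSet.mp hw 1
    refine ⟨z, ?_⟩
    have : z * (1 + w) = z * 1 * w + z := by noncomm_ring
    rw [this, hz]
  obtain ⟨z, hz⟩ := key x hx
  have hzx : -(z * x) ∈ jacobsonSet R := jacobsonSet_neg (jacobsonSet_mul_left hx z)
  obtain ⟨w, hw⟩ := key _ hzx
  have hz' : z + z * x = 1 := by rw [← hz]; noncomm_ring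
  have hz2 : (1 : R) + -(z * x) = z := by rw [← hz']; abel
  rw [hz2] at hw
  refine ⟨z, ?_, hz⟩
  have hwx : w = 1 + x := by
    calc w = w * (z * (1 + x)) := by rw [hz, mul_one]
    _ = w * z * (1 + x) := by rw [mul_assoc]
    _ = 1 + x := by rw [hw, one_mul]
  rw [← hwx]; exact hw

lemma mem_jac_of_right_inv {a : R} (h : ∀ r : R, ∃ s : R, (1 + a * r) * s = 1) :
    a ∈ jacobsonSet R := by
  have h2 : ∀ r : R, ∃ s : R, (1 + a * r) * s = 1 ∧ s * (1 + a * r) = 1 := by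
    intro r
    obtain ⟨s, hs⟩ := h r
    have hsum : s + a * r * s = 1 := by rw [← hs]; noncomm_ring
    have hs' : (1 : R) + a * -(r * s) = s := by rw [← hsum]; noncomm_ring
    obtain ⟨t, ht⟩ := h (-(r * s))
    rw [hs'] at ht
    refine ⟨s, hs, ?_⟩
    have htv : t = 1 + a * r := by
      calc t = (1 + a * r) * s * t := by rw [hs, one_mul]
      _ = (1 + a * r) * (s * t) := by rw [mul_assoc]
      _ = 1 + a * r := by rw [ht, mul_one]
    rw [← htv]; exact ht
  rw [mem_jacobsonSet]
  intro y
  obtain ⟨u, _, hu2⟩ := h2 y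
  refine ⟨1 - y * u * a, ?_⟩
  have expand : (1 - y * u * a) * y * a + (1 - y * u * a) =
      1 + y * a - y * (u * (1 + a * y)) * a := by noncomm_ring
  rw [expand, hu2]; noncomm_ring

lemma lSingular_mul_right {a : R} (ha : a ∈ lSingular R) (r : R) :
    a * r ∈ lSingular R := by
  refine ess_mono ?_ ha
  intro u hu
  rw [mem_lAnnI_singleton] at hu ⊢
  rw [← mul_assoc, hu, zero_mul]

lemma lSingular_subset_jacobson (hP : IsLeftPInjective R) :
    lSingular R ⊆ jacobsonSet R := by
  intro a ha
  apply mem_jac_of_right_inv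
  intro r
  have hx : a * r ∈ lSingular R := lSingular_mul_right ha r
  have hbot : lAnnI R {1 + a * r} = ⊥ := by
    apply hx
    apply (Submodule.eq_bot_iff _).mpr
    intro u hu
    obtain ⟨h1, h2⟩ := Submodule.mem_inf.mp hu
    rw [mem_lAnnI_singleton] at h1 h2
    calc u = u * (1 + a * r) - u * (a * r) := by noncomm_ring
    _ = 0 := by rw [h1, h2, sub_zero]
  have hann : ∀ u : R, u * (1 + a * r) = 0 → u * 1 = 0 := by
    intro u hu
    have hu' : u ∈ lAnnI R {1 + a * r} := mem_lAnnI_singleton.mpr hu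
    rw [hbot, Submodule.mem_bot] at hu'
    rw [hu', zero_mul]
  obtain ⟨s, hs⟩ := (hP (1 + a * r) 1).mp hann
  exact ⟨s, hs.symm⟩

lemma jacobson_subset_lSingular (hP : IsLeftPInjective R) :
    jacobsonSet R ⊆ lSingular R := by
  intro a ha K hK
  apply (Submodule.eq_bot_iff _).mpr
  intro b hb
  have hmap : ∀ u : R, u * (b * a) = 0 → u * b = 0 := by
    intro u hu
    have hub : u * b ∈ K := K.smul_mem u hb
    have huann : u * b ∈ lAnnI R {a} := by
      rw [mem_lAnnI_singleton, mul_assoc]; exact hu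
    have hmem : u * b ∈ K ⊓ lAnnI R {a} := Submodule.mem_inf.mpr ⟨hub, huann⟩
    rw [hK, Submodule.mem_bot] at hmem
    exact hmem
  obtain ⟨s, hs⟩ := (hP (b * a) b).mp hmap
  have has : -(a * s) ∈ jacobsonSet R := jacobsonSet_neg (jacobsonSet_mul_right ha s)
  obtain ⟨z, hz1, _⟩ := one_add_unit_of_mem_jac has
  have hb0 : b * (1 + -(a * s)) = 0 := by
    have : b * (1 + -(a * s)) = b - b * a * s := by noncomm_ring
    rw [this]
    rw [mul_assoc] at hs ⊢
    rw [← hs, sub_self]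
  calc b = b * ((1 + -(a * s)) * z) := by rw [hz1, mul_one]
  _ = b * (1 + -(a * s)) * z := by rw [mul_assoc]
  _ = 0 := by rw [hb0, zero_mul]

/-- `R` as a right module over itself, via `Rᵐᵒᵖ`, is linearly equivalent to `Rᵐᵒᵖ`. -/
def rOpEquiv : R ≃ₗ[Rᵐᵒᵖ] Rᵐᵒᵖ where
  toFun := MulOpposite.op
  invFun := MulOpposite.unop
  left_inv _ := rfl
  right_inv _ := rfl
  map_add' _ _ := rfl
  map_smul' _ _ := rfl

lemma lAnnJ_essential [IsNoetherianRing Rᵐᵒᵖ] (hP : IsLeftPInjective R) :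
    IsEssentialLIdeal R (lAnnI R (jacobsonSet R)) := by
  classical
  let N : RIdeal R :=
    { carrier := jacobsonSet R
      add_mem' := fun ha hb => jacobsonSet_add ha hb
      zero_mem' := jacobsonSet_zero
      smul_mem' := fun c x hx => jacobsonSet_mul_right hx c.unop }
  haveI : IsNoetherian Rᵐᵒᵖ R := isNoetherian_of_linearEquiv (rOpEquiv (R := R)).symm
  obtain ⟨S, hS⟩ := IsNoetherian.noetherian N
  have hSJ : ∀ x ∈ S, x ∈ lSingular R := by
    intro x hx
    have : x ∈ N := hS ▸ Submodule.subset_span hx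
    exact jacobson_subset_lSingular hP this
  have hinf : IsEssentialLIdeal R (S.inf fun x => lAnnI R {x}) :=
    ess_finset_inf fun x hx => hSJ x hx
  have hle : (S.inf fun x => lAnnI R {x}) ≤ lAnnI R (jacobsonSet R) := by
    intro u hu
    intro j hj
    have hj' : j ∈ Submodule.span Rᵐᵒᵖ (↑S : Set R) := by
      rw [hS]; exact hj
    refine Submodule.span_induction ?_ ?_ ?_ ?_ hj'
    · intro x hx
      have := Submodule.mem_finsetInf.mp hu x hx
      exact mem_lAnnI_singleton.mp this
    · exact mul_zero u
    · intro x y _ _ hx hy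
      rw [mul_add, hx, hy, add_zero]
    · intro c x _ hx
      show u * (x * c.unop) = 0
      rw [← mul_assoc, hx, zero_mul]
  exact ess_mono hle hinf

end Proof

/-- Right noetherian left P-injective: `J = rl(J)`. -/
theorem stmt2 {R : Type*} [Ring R] [IsNoetherianRing Rᵐᵒᵖ] (hP : IsLeftPInjective R) :
    jacobsonSet R = rAnn R (lAnn R (jacobsonSet R)) := by
  apply Set.Subset.antisymm
  · intro j hj x hx
    exact hx j hj
  · intro a ha
    apply lSingular_subset_jacobson hP
    refine ess_mono ?_ (lAnnJ_essential hP)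
    intro u hu
    rw [mem_lAnnI_singleton]
    exact ha u hu
end

section
/- If R is a right noetherian and left P-injective ring, then the Jacobson radical of R is nilpotent. -/
/-!
If `a ∈ J` and `y ≠ 0`, then `l(ya) ⊄ l(y)`: otherwise P-injectivity puts `y` in `rl(ya) = yaR`,
so `ya = yasa`, and `1 - sa` is a unit, forcing `ya = 0` and then `l(ya) = R ⊄ l(y)`.
Any set `S` with this property is nilpotent once `R` is right noetherian. The left annihilators
`W_k = l(R S^k)` form an ascending chain of right ideals, stable from some `K` on. If `W_K ≠ R`,
pick `z ∉ W_K` with `r(z)` maximal. For `t ∈ R S^K` and `a ∈ S` with `zt ≠ 0` there is `u` with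
`uzt ≠ 0 = uzta`; then `uz ∉ W_K` and `r(z) ⊆ r(uz)`, so `r(uz) = r(z)` and `zta = 0`.
Hence `z ∈ W_{K+1} = W_K`, a contradiction; so `W_K = R`, i.e. `S^K = 0`.
-/

lemma mul_prod_ofFn_succ {M : Type*} [Monoid M] {k : ℕ} (x : M) (f : Fin (k + 1) → M) :
    x * (List.ofFn f).prod = x * (List.ofFn fun i => f i.castSucc).prod * f (Fin.last k) := by
  rw [List.ofFn_succ', List.prod_concat, mul_assoc]

section

variable {R : Type*} [Ring R]

lemma jacobsonSet_eq : jacobsonSet R = Ideal.jacobson (⊥ : Ideal R) := by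
  rw [jacobsonSet, ← TwoSidedIdeal.coe_asIdeal, TwoSidedIdeal.asIdeal_jacobson,
    TwoSidedIdeal.bot_asIdeal]

lemma Ideal.isUnit_one_add_of_mem_jacobson_bot {x : R} (hx : x ∈ Ideal.jacobson (⊥ : Ideal R)) :
    IsUnit (1 + x) := by
  have left_inv : ∀ y ∈ Ideal.jacobson (⊥ : Ideal R), ∃ z, z * (1 + y) = 1 := fun y hy => by
    obtain ⟨z, hz⟩ := Ideal.exists_mul_add_sub_mem_of_mem_jacobson y hy
    exact ⟨z, by rwa [Ideal.mem_bot, sub_eq_zero, add_comm] at hz⟩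
  obtain ⟨z, hz⟩ := left_inv x hx
  have hz_eq : z = 1 + -(z * x) := by
    rw [mul_add, mul_one] at hz
    rw [← hz]; abel
  obtain ⟨w, hw⟩ := left_inv _ (Submodule.neg_mem _ (Ideal.mul_mem_left _ z hx))
  rw [← hz_eq] at hw
  have hw_eq : w = 1 + x := by
    calc w = w * (z * (1 + x)) := by rw [hz, mul_one]
      _ = 1 + x := by rw [← mul_assoc, hw, one_mul]
  exact ⟨⟨1 + x, z, by rw [← hw_eq, hw], hz⟩, rfl⟩

lemma IsLeftPInjective.exists_mul_ne_zero_mul_eq_zero (hP : IsLeftPInjective R) {a y : R}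
    (ha : a ∈ Ideal.jacobson (⊥ : Ideal R)) (hy : y ≠ 0) : ∃ u, u * y ≠ 0 ∧ u * y * a = 0 := by
  by_contra! h
  obtain ⟨s, hs⟩ := (hP (y * a) y).mp fun u hu => by
    by_contra hne
    exact h u hne (by rw [mul_assoc, hu])
  have hunit : IsUnit (1 + -(s * a)) :=
    Ideal.isUnit_one_add_of_mem_jacobson_bot
      (Submodule.neg_mem _ (Ideal.mul_mem_left _ s ha))
  have hya : y * a * (1 + -(s * a)) = 0 := by
    rw [mul_add, mul_one, mul_neg, ← mul_assoc, ← hs, add_neg_cancel]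
  exact h 1 (by rwa [one_mul]) (by rw [one_mul, ← hunit.mul_left_eq_zero, hya])

lemma mem_rAnnI_singleton {z x : R} : x ∈ rAnnI R {z} ↔ z * x = 0 := by
  simp [rAnnI, rAnn]

/-- `lAnnPow S k` is the left annihilator of `R S^k`. -/
def lAnnPow (S : Set R) (k : ℕ) : RIdeal R where
  carrier := {u | ∀ r : R, ∀ f : Fin k → R, (∀ i, f i ∈ S) → u * r * (List.ofFn f).prod = 0}
  add_mem' ha hb r f hf := by rw [add_mul, add_mul, ha r f hf, hb r f hf, add_zero]
  zero_mem' r f _ := by rw [zero_mul, zero_mul]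
  smul_mem' c u hu r f hf := by
    change u * c.unop * r * _ = 0
    rw [mul_assoc u, hu _ f hf]

section lAnnPow

variable {S : Set R} {k : ℕ}

lemma lAnnPow_mono : Monotone (lAnnPow S) :=
  monotone_nat_of_le_succ fun k u hu r f hf => by
    rw [mul_prod_ofFn_succ, hu r _ fun i => hf _, zero_mul]

lemma mem_lAnnPow_succ_of_rAnnI_maximal
    (hS : ∀ a ∈ S, ∀ y : R, y ≠ 0 → ∃ u, u * y ≠ 0 ∧ u * y * a = 0) {z : R}
    (hmax : ∀ z', z' ∉ lAnnPow S k → rAnnI R {z} ≤ rAnnI R {z'} → rAnnI R {z'} ≤ rAnnI R {z}) :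
    z ∈ lAnnPow S (k + 1) := by
  intro r f hf
  set t := r * (List.ofFn fun i => f i.castSucc).prod
  have ht : z * r * (List.ofFn f).prod = z * t * f (Fin.last k) := by
    rw [mul_prod_ofFn_succ, mul_assoc z r]
  rw [ht]
  by_cases hzt : z * t = 0
  · rw [hzt, zero_mul]
  obtain ⟨u, hu, hua⟩ := hS _ (hf (Fin.last k)) _ hzt
  have huz : u * z ∉ lAnnPow S k := fun h =>
    hu (by rw [← mul_assoc, ← mul_assoc, h r _ fun i => hf _])
  have hle : rAnnI R {z} ≤ rAnnI R {u * z} := fun x hx => by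
    rw [mem_rAnnI_singleton] at hx ⊢
    rw [mul_assoc, hx, mul_zero]
  have hmem : t * f (Fin.last k) ∈ rAnnI R {u * z} := by
    rw [mem_rAnnI_singleton]; simpa only [mul_assoc] using hua
  simpa only [mem_rAnnI_singleton, mul_assoc] using hmax _ huz hle hmem

lemma lAnnPow_eq_top [IsNoetherian Rᵐᵒᵖ R]
    (hS : ∀ a ∈ S, ∀ y : R, y ≠ 0 → ∃ u, u * y ≠ 0 ∧ u * y * a = 0)
    (hstab : lAnnPow S k = lAnnPow S (k + 1)) : lAnnPow S k = ⊤ := by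
  by_contra hne
  obtain ⟨z₀, -, hz₀⟩ := SetLike.exists_of_lt (lt_top_iff_ne_top.mpr hne)
  obtain ⟨_, ⟨z, hz, rfl⟩, hmax⟩ := set_has_maximal_iff_noetherian.mpr ‹_›
    {I | ∃ z ∉ lAnnPow S k, I = rAnnI R {z}} ⟨_, z₀, hz₀, rfl⟩
  refine hz (hstab ▸ mem_lAnnPow_succ_of_rAnnI_maximal hS fun z' hz' hle => ?_)
  exact not_lt_iff_le_imp_ge.mp (hmax _ ⟨z', hz', rfl⟩) hle

end lAnnPow

theorem isNilpotentSet_of_forall_exists_mul_ne_zero_mul_eq_zero [IsNoetherianRing Rᵐᵒᵖ]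
    {S : Set R} (hS : ∀ a ∈ S, ∀ y : R, y ≠ 0 → ∃ u, u * y ≠ 0 ∧ u * y * a = 0) :
    IsNilpotentSet R S := by
  have : IsNoetherian Rᵐᵒᵖ R := isNoetherian_of_linearEquiv (MulOpposite.opLinearEquiv Rᵐᵒᵖ).symm
  obtain ⟨K, hK⟩ := monotone_stabilizes_iff_noetherian.mpr this ⟨lAnnPow S, lAnnPow_mono⟩
  have hstab : lAnnPow S (K + 1) = lAnnPow S (K + 2) :=
    (hK (K + 1) K.le_succ).symm.trans (hK (K + 2) (by omega))
  have hone : (1 : R) ∈ lAnnPow S (K + 1) := by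
    rw [lAnnPow_eq_top hS hstab]; exact Submodule.mem_top
  exact ⟨K, fun f hf => by simpa using hone 1 f hf⟩

end

/-- Right noetherian left P-injective: `J` is nilpotent. -/
theorem stmt3 {R : Type*} [Ring R] [IsNoetherianRing Rᵐᵒᵖ] (hP : IsLeftPInjective R) :
    IsNilpotentSet R (jacobsonSet R) :=
  isNilpotentSet_of_forall_exists_mul_ne_zero_mul_eq_zero fun _ ha _ hy =>
    hP.exists_mul_ne_zero_mul_eq_zero (by rwa [jacobsonSet_eq] at ha) hy
end

section
/- Let R satisfy the ascending chain condition on right annihilators, and suppose the left annihilator l(S_r) of the right socle is a two-sided ideal of R. Then the quotient ring R/l(S_r) also satisfies the ascending chain condition on right annihilators. -/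
section Aux
variable {R : Type*} [Ring R]

lemma rAnn_antitone {X Y : Set R} (h : X ⊆ Y) : rAnn R Y ⊆ rAnn R X :=
  fun _ ha x hx => ha x (h hx)

lemma lAnn_antitone {X Y : Set R} (h : X ⊆ Y) : lAnn R Y ⊆ lAnn R X :=
  fun _ ha x hx => ha x (h hx)

lemma subset_lAnn_rAnn (X : Set R) : X ⊆ lAnn R (rAnn R X) :=
  fun x hx a ha => ha x hx

lemma subset_rAnn_lAnn (X : Set R) : X ⊆ rAnn R (lAnn R X) :=
  fun x hx a ha => ha x hx

lemma rAnn_lAnn_rAnn (X : Set R) : rAnn R (lAnn R (rAnn R X)) = rAnn R X :=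
  Set.Subset.antisymm (rAnn_antitone (subset_lAnn_rAnn X))
    (fun a ha b hb => hb a ha)

lemma lAnn_rAnn_lAnn (X : Set R) : lAnn R (rAnn R (lAnn R X)) = lAnn R X :=
  Set.Subset.antisymm (lAnn_antitone (subset_rAnn_lAnn X))
    (fun a ha b hb => hb a ha)

end Aux

/-- If `R` has ACC on right annihilators and `l(S_r)` is a two-sided ideal, then
`R / l(S_r)` has ACC on right annihilators. -/
theorem stmt12 {R : Type*} [Ring R] (hacc : ACCOnRightAnnihilators R)
    (I : TwoSidedIdeal R) (hI : (I : Set R) = lAnn R (rSocle R : Set R)) :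
    ACCOnRightAnnihilators I.ringCon.Quotient := by
  set S : Set R := (rSocle R : Set R)
  set Q := I.ringCon.Quotient
  let π : R →+* Q := I.ringCon.mk'
  have hπs : Function.Surjective π := fun x => Quot.exists_rep x
  have hker : ∀ a : R, π a = 0 ↔ ∀ s ∈ S, a * s = 0 := by
    intro a
    have : π a = 0 ↔ a ∈ I := by
      rw [show (0 : Q) = π 0 from (map_zero π).symm]
      exact (RingCon.eq _).trans (TwoSidedIdeal.mem_iff I a).symm
    rw [this, ← SetLike.mem_coe, hI]; rfl
  -- preimage of a left annihilator in Q is a left annihilator in R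
  have key : ∀ T : Set Q, π ⁻¹' (lAnn Q T) = lAnn R {z : R | ∃ y s, π y ∈ T ∧ s ∈ S ∧ z = y * s} := by
    intro T
    ext a
    simp only [Set.mem_preimage, lAnn, Set.mem_setOf_eq]
    constructor
    · rintro h z ⟨y, s, hy, hs, rfl⟩
      have : π (a * y) = 0 := by rw [map_mul]; exact h _ hy
      rw [← mul_assoc]
      exact (hker (a * y)).mp this s hs
    · intro h t ht
      obtain ⟨y, rfl⟩ := hπs t
      rw [← map_mul]
      refine (hker (a * y)).mpr ?_
      intro s hs
      rw [mul_assoc]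
      exact h _ ⟨y, s, ht, hs, rfl⟩
  intro f hf hmono
  -- descending chain of left annihilators in Q, pulled back to R
  set G : ℕ → Set R := fun n => π ⁻¹' (lAnn Q (f n)) with hG
  have hGann : ∀ n, ∃ Y : Set R, G n = lAnn R Y := fun n => ⟨_, key (f n)⟩
  set F : ℕ → Set R := fun n => rAnn R (G n) with hF
  have hFann : ∀ n, ∃ Y : Set R, F n = rAnn R Y := fun n => ⟨G n, rfl⟩
  have hFmono : ∀ n, F n ⊆ F (n + 1) := by
    intro n
    apply rAnn_antitone
    exact Set.preimage_mono (lAnn_antitone (hmono n))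
  obtain ⟨N, hN⟩ := hacc F hFann hFmono
  refine ⟨N, fun m hm => ?_⟩
  have hGeq : G m = G N := by
    obtain ⟨Ym, hYm⟩ := hGann m
    obtain ⟨YN, hYN⟩ := hGann N
    have : lAnn R (F m) = lAnn R (F N) := by rw [hN m hm]
    rw [hF] at this
    simp only at this
    rw [hYm, hYN] at this ⊢
    rwa [lAnn_rAnn_lAnn, lAnn_rAnn_lAnn] at this
  have hlQ : lAnn Q (f m) = lAnn Q (f N) := by
    have h1 : π '' (G m) = π '' (G N) := by rw [hGeq]
    rwa [hG, Set.image_preimage_eq _ hπs, Set.image_preimage_eq _ hπs] at h1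
  obtain ⟨Xm, hXm⟩ := hf m
  obtain ⟨XN, hXN⟩ := hf N
  rw [hXm, hXN, ← rAnn_lAnn_rAnn Xm, ← rAnn_lAnn_rAnn XN, ← hXm, ← hXN, hlQ]
end

section
/- If R is a right mininjective ring with ACC on right annihilators in which the right socle S_r is essential in R as a right R-module, then R is semiprimary (i.e., R/J(R) is semisimple and J(R) is nilpotent). -/
section NYAux

open Submodule MulOpposite

variable {R : Type*} [Ring R]

namespace NY

/-! ### Annihilator basics -/

lemma mem_rAnn {X : Set R} {t : R} : t ∈ rAnn R X ↔ ∀ x ∈ X, x * t = 0 := Iff.rfl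

lemma mem_lAnn {X : Set R} {t : R} : t ∈ lAnn R X ↔ ∀ x ∈ X, t * x = 0 := Iff.rfl

lemma mem_rAnnI {X : Set R} {t : R} : t ∈ rAnnI R X ↔ ∀ x ∈ X, x * t = 0 := Iff.rfl

lemma subset_rAnn {X : Set R} : X ⊆ rAnn R (lAnn R X) := fun x hx _ ha => ha x hx

lemma subset_lAnn {X : Set R} : X ⊆ lAnn R (rAnn R X) := fun x hx _ ha => ha x hx

lemma lAnn_antitone {X Y : Set R} (h : X ⊆ Y) : lAnn R Y ⊆ lAnn R X :=
  fun a ha x hx => ha x (h hx)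

lemma rAnn_antitone {X Y : Set R} (h : X ⊆ Y) : rAnn R Y ⊆ rAnn R X :=
  fun a ha x hx => ha x (h hx)

lemma lAnn_rAnn_lAnn (X : Set R) : lAnn R (rAnn R (lAnn R X)) = lAnn R X :=
  Set.Subset.antisymm (fun a ha x hx => ha x (subset_rAnn hx)) subset_lAnn

/-! ### Span lemmas -/

lemma mem_opSpan {k x : R} :
    x ∈ Submodule.span Rᵐᵒᵖ {k} ↔ ∃ r : R, x = k * r := by
  rw [Submodule.mem_span_singleton]
  constructor
  · rintro ⟨c, rfl⟩; exact ⟨c.unop, rfl⟩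
  · rintro ⟨r, rfl⟩; exact ⟨op r, rfl⟩

lemma mem_lSpan {k x : R} :
    x ∈ Submodule.span R {k} ↔ ∃ r : R, x = r * k := by
  rw [Submodule.mem_span_singleton]
  constructor
  · rintro ⟨c, rfl⟩; exact ⟨c, rfl⟩
  · rintro ⟨r, rfl⟩; exact ⟨r, rfl⟩

lemma simple_k_ne_zero {k : R} (hk : IsSimpleModule Rᵐᵒᵖ (Submodule.span Rᵐᵒᵖ {k})) :
    k ≠ 0 := by
  intro h
  apply (isSimpleModule_iff_isAtom.mp hk).1
  rw [h, Submodule.span_zero_singleton]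

lemma span_eq_of_mem_simple {m : Submodule Rᵐᵒᵖ R} (hm : IsSimpleModule Rᵐᵒᵖ m)
    {x : R} (hx : x ∈ m) (hx0 : x ≠ 0) : Submodule.span Rᵐᵒᵖ {x} = m := by
  have hatom := isSimpleModule_iff_isAtom.mp hm
  have hle : Submodule.span Rᵐᵒᵖ {x} ≤ m := Submodule.span_le.mpr (by simpa using hx)
  rcases lt_or_eq_of_le hle with h | h
  · exact absurd (hatom.2 _ h) (by simpa [Submodule.span_singleton_eq_bot] using hx0)
  · exact h

/-! ### Mininjectivity: the key factorization -/

lemma exists_factor (hmin : IsRightMininjective R) {k a : R}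
    (hk : IsSimpleModule Rᵐᵒᵖ (Submodule.span Rᵐᵒᵖ {k})) (hak : a * k ≠ 0) :
    ∃ c : R, k = c * (a * k) := by
  haveI := hk
  set K : RIdeal R := Submodule.span Rᵐᵒᵖ {k} with hK
  set K' : RIdeal R := Submodule.span Rᵐᵒᵖ {a * k} with hK'
  set La : R →ₗ[Rᵐᵒᵖ] R :=
    { toFun := fun x => a * x
      map_add' := fun x y => mul_add a x y
      map_smul' := fun c x => by
        show a * (x * c.unop) = (a * x) * c.unop
        rw [mul_assoc] } with hLa
  have hmap : K.map La = K' := by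
    rw [hK, Submodule.map_span, Set.image_singleton]; rfl
  set la : ↥K →ₗ[Rᵐᵒᵖ] ↥K' :=
    La.restrict (p := K) (q := K') (fun x hx => by
      rw [← hmap]; exact Submodule.mem_map_of_mem hx) with hla
  have hker : LinearMap.ker la = ⊥ := by
    rcases eq_bot_or_eq_top (LinearMap.ker la) with h | h
    · exact h
    · exfalso
      have hkmem : (⟨k, Submodule.mem_span_singleton_self k⟩ : ↥K) ∈ LinearMap.ker la := by
        rw [h]; trivial
      exact hak (congrArg Subtype.val (LinearMap.mem_ker.mp hkmem))
  have hinj : Function.Injective la := LinearMap.ker_eq_bot.mp hker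
  have hsurj : Function.Surjective la := by
    rintro ⟨y, hy⟩
    rw [← hmap] at hy
    obtain ⟨x, hx, hfx⟩ := hy
    exact ⟨⟨x, hx⟩, Subtype.ext hfx⟩
  set e := LinearEquiv.ofBijective la ⟨hinj, hsurj⟩ with he
  haveI hK'simple : IsSimpleModule Rᵐᵒᵖ ↥K' := IsSimpleModule.congr e.symm
  set φ : ↥K' →ₗ[Rᵐᵒᵖ] R := K.subtype.comp (e.symm : ↥K' →ₗ[Rᵐᵒᵖ] ↥K) with hφ
  obtain ⟨c, hc⟩ := hmin K' hK'simple φ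
  set x₀ : ↥K' := ⟨a * k, Submodule.mem_span_singleton_self _⟩ with hx₀
  have hek : e ⟨k, Submodule.mem_span_singleton_self k⟩ = x₀ := by
    apply Subtype.ext
    simp only [he, LinearEquiv.ofBijective_apply]
    rfl
  have hsymm : e.symm x₀ = ⟨k, Submodule.mem_span_singleton_self k⟩ := by
    rw [← hek, LinearEquiv.symm_apply_apply]
  have hφx : φ x₀ = k := by
    rw [hφ, LinearMap.comp_apply, LinearEquiv.coe_coe, hsymm]
    rfl
  refine ⟨c, ?_⟩
  have h2 := hc x₀
  rw [hφx] at h2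
  exact h2

lemma jacobson_mul_simple (hmin : IsRightMininjective R) {k a : R}
    (hk : IsSimpleModule Rᵐᵒᵖ (Submodule.span Rᵐᵒᵖ {k}))
    (ha : a ∈ jacobsonSet R) : a * k = 0 := by
  by_contra h
  obtain ⟨c, hc⟩ := exists_factor hmin hk h
  have hca : c * a ∈ TwoSidedIdeal.jacobson (⊥ : TwoSidedIdeal R) :=
    TwoSidedIdeal.mul_mem_left _ c a ha
  obtain ⟨z, hz⟩ := TwoSidedIdeal.mem_jacobson_iff.mp hca (-1)
  rw [TwoSidedIdeal.mem_bot] at hz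
  apply simple_k_ne_zero hk
  have h1 : z * (-1) * (c * a) + z = 1 := by rwa [sub_eq_zero] at hz
  have hwk : k = (c * a) * k := by rw [mul_assoc]; exact hc
  have hzero : (z * (-1) * (c * a) + z) * k = 0 := by
    rw [add_mul, mul_assoc (z * (-1)) (c * a) k, ← hwk, mul_neg_one, neg_mul,
      neg_add_cancel]
  calc k = (z * (-1) * (c * a) + z) * k := by rw [h1, one_mul]
    _ = 0 := hzero

/-- A right mininjective ring: `Rk` is a simple left ideal whenever `kR` is a
simple right ideal. -/
lemma Rk_simple (hmin : IsRightMininjective R) {k : R}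
    (hk : IsSimpleModule Rᵐᵒᵖ (Submodule.span Rᵐᵒᵖ {k})) :
    IsSimpleModule R (Submodule.span R {k}) := by
  rw [isSimpleModule_iff_isAtom]
  constructor
  · simpa [Submodule.span_singleton_eq_bot] using simple_k_ne_zero hk
  · intro b hb
    by_contra hbne
    obtain ⟨x, hxb, hx0⟩ := (Submodule.ne_bot_iff b).mp hbne
    obtain ⟨r, rfl⟩ := mem_lSpan.mp (hb.le hxb)
    obtain ⟨c, hc⟩ := exists_factor hmin hk hx0
    have hkb : k ∈ b := by
      rw [hc]
      exact b.smul_mem c hxb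
    exact hb.not_ge (Submodule.span_le.mpr (by simpa using hkb))

/-! ### The Jacobson radical kills the right socle -/

lemma jacobson_mul_socle (hmin : IsRightMininjective R) {a s : R}
    (ha : a ∈ jacobsonSet R) (hs : s ∈ rSocle R) : a * s = 0 := by
  set T : RIdeal R :=
    { carrier := {x | a * x = 0}
      add_mem' := by intro x y hx hy; show a * (x + y) = 0; rw [mul_add, hx, hy, add_zero]
      zero_mem' := mul_zero a
      smul_mem' := by
        intro c x hx
        show a * (x * c.unop) = 0
        rw [← mul_assoc, hx, zero_mul] } with hT
  have hle : rSocle R ≤ T := by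
    apply sSup_le
    intro m hm
    intro x hx
    show a * x = 0
    by_cases hx0 : x = 0
    · rw [hx0, mul_zero]
    · have hsp : IsSimpleModule Rᵐᵒᵖ (Submodule.span Rᵐᵒᵖ {x}) := by
        rw [span_eq_of_mem_simple hm hx hx0]; exact hm
      exact jacobson_mul_simple hmin hsp ha
  exact hle hs

lemma lAnn_socle_subset_singular (hess : IsEssentialRIdeal R (rSocle R))
    {a : R} (ha : ∀ s ∈ rSocle R, a * s = 0) : a ∈ rSingular R := by
  intro K hK
  apply hess
  have hle : rSocle R ≤ rAnnI R {a} := by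
    intro s hs
    intro x hx
    rw [Set.mem_singleton_iff] at hx
    rw [hx]
    exact ha s hs
  rw [eq_bot_iff]
  calc K ⊓ rSocle R ≤ K ⊓ rAnnI R {a} := inf_le_inf_left K hle
    _ = ⊥ := hK

/-! ### ACC: maximal elements of families of right annihilators -/

lemma acc_max (hacc : ACCOnRightAnnihilators R) (G : Set (Set R))
    (hG : ∀ g ∈ G, ∃ X : Set R, g = rAnn R X) (hne : G.Nonempty) :
    ∃ g ∈ G, ∀ g' ∈ G, g ⊆ g' → g' = g := by
  by_contra hcon
  push_neg at hcon
  have step : ∀ g : {g // g ∈ G}, ∃ g' : {g // g ∈ G}, g.1 ⊆ g'.1 ∧ g'.1 ≠ g.1 := by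
    rintro ⟨g, hg⟩
    obtain ⟨g', hg', hsub, hne'⟩ := hcon g hg
    exact ⟨⟨g', hg'⟩, hsub, hne'⟩
  let f : ℕ → {g // g ∈ G} := fun n =>
    Nat.rec ⟨hne.choose, hne.choose_spec⟩ (fun _ p => (step p).choose) n
  have hf : ∀ n, (f n).1 ⊆ (f (n + 1)).1 ∧ (f (n + 1)).1 ≠ (f n).1 := fun n =>
    (step (f n)).choose_spec
  obtain ⟨N, hN⟩ := hacc (fun n => (f n).1) (fun n => hG _ (f n).2) (fun n => (hf n).1)
  exact (hf N).2 (hN (N + 1) (Nat.le_succ N))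

/-! ### The right singular ideal -/

lemma singular_mul_left {z : R} (hz : z ∈ rSingular R) (y : R) : y * z ∈ rSingular R := by
  intro K hK
  apply hz K
  rw [eq_bot_iff]
  refine le_trans (inf_le_inf_left K ?_) hK.le
  intro t ht
  intro x hx
  rw [Set.mem_singleton_iff] at hx
  subst hx
  have h1 : z * t = 0 := ht z rfl
  rw [mul_assoc, h1, mul_zero]

/-! ### Mewborn–Winton: products from the singular ideal vanish -/

lemma MW (hacc : ACCOnRightAnnihilators R) :
    ∃ n, 1 ≤ n ∧ ∀ f : Fin n → R, (∀ i, f i ∈ rSingular R) →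
      (List.ofFn f).prod = 0 := by
  classical
  set P : ℕ → Set R := fun n =>
    {x | ∃ f : Fin n → R, (∀ i, f i ∈ rSingular R) ∧ (List.ofFn f).prod = x} with hP
  have hmono : ∀ n, rAnn R (P n) ⊆ rAnn R (P (n + 1)) := by
    intro n t ht x hx
    obtain ⟨f, hf, rfl⟩ := hx
    rw [List.ofFn_succ, List.prod_cons]
    have htail : (List.ofFn fun i : Fin n => f i.succ).prod ∈ P n :=
      ⟨fun i => f i.succ, fun i => hf _, rfl⟩
    rw [mul_assoc, ht _ htail, mul_zero]
  obtain ⟨N, hN⟩ := hacc (fun n => rAnn R (P n)) (fun n => ⟨P n, rfl⟩) hmono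
  set n := N + 1 with hn
  refine ⟨n, Nat.le_add_left 1 N, ?_⟩
  by_contra hcon
  push_neg at hcon
  obtain ⟨f₀, hf₀, hf₀0⟩ := hcon
  have hstab : rAnn R (P (n + 1)) = rAnn R (P n) := by
    rw [hN (n + 1) (by omega), hN n (by omega)]
  -- the family of annihilators of elements not killed by `P n`
  set G : Set (Set R) := {g | ∃ a : R, g = rAnn R {a} ∧ ∃ p ∈ P n, p * a ≠ 0} with hG
  have hGne : G.Nonempty := by
    refine ⟨rAnn R {1}, 1, rfl, (List.ofFn f₀).prod, ⟨f₀, hf₀, rfl⟩, by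
      rwa [mul_one]⟩
  obtain ⟨g, hgG, hgmax⟩ := acc_max hacc G
    (by rintro g ⟨a, rfl, -⟩; exact ⟨{a}, rfl⟩) hGne
  obtain ⟨a, rfl, p, hp, hpa⟩ := hgG
  have hanot : a ∉ rAnn R (P n) := fun h => hpa (h p hp)
  have hanot' : a ∉ rAnn R (P (n + 1)) := by rwa [hstab]
  have : ∃ q ∈ P (n + 1), q * a ≠ 0 := by
    by_contra h
    push_neg at h
    exact hanot' (fun q hq => h q hq)
  obtain ⟨q, ⟨f', hf', rfl⟩, hqa⟩ := this
  set z := f' (Fin.last n) with hz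
  have hzZ : z ∈ rSingular R := hf' _
  set p' := (List.ofFn fun i : Fin n => f' i.castSucc).prod with hp'
  have hp'P : p' ∈ P n := ⟨fun i => f' i.castSucc, fun i => hf' _, rfl⟩
  have hfact : (List.ofFn f').prod = p' * z := by
    rw [List.ofFn_succ', List.prod_concat]
  have hp'za : p' * (z * a) ≠ 0 := by
    rw [← mul_assoc, ← hfact]
    exact hqa
  have hmemG : rAnn R {z * a} ∈ G := ⟨z * a, rfl, p', hp'P, hp'za⟩
  have hsub : rAnn R {a} ⊆ rAnn R {z * a} := by
    intro t ht x hx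
    rw [Set.mem_singleton_iff] at hx
    subst hx
    rw [mul_assoc, ht a rfl, mul_zero]
  have heq : rAnn R {z * a} = rAnn R {a} := hgmax _ hmemG hsub
  -- use essentiality of the annihilator of `z`
  have ha0 : a ≠ 0 := fun h => hpa (by rw [h, mul_zero])
  have hKne : Submodule.span Rᵐᵒᵖ {a} ≠ ⊥ := by
    simpa [Submodule.span_singleton_eq_bot] using ha0
  have hKZ : Submodule.span Rᵐᵒᵖ {a} ⊓ rAnnI R {z} ≠ ⊥ := by
    intro h
    exact hKne (hzZ _ h)
  obtain ⟨w, hw, hw0⟩ := (Submodule.ne_bot_iff _).mp hKZ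
  obtain ⟨t, rfl⟩ := mem_opSpan.mp hw.1
  have hzw : z * (a * t) = 0 := hw.2 z rfl
  have htann : t ∈ rAnn R {z * a} := by
    intro x hx
    rw [Set.mem_singleton_iff] at hx
    subst hx
    rwa [mul_assoc]
  rw [heq] at htann
  exact hw0 (htann a rfl)

/-- The right singular ideal is contained in the Jacobson radical once its products
vanish. -/
lemma singular_subset_jacobson
    (hmw : ∃ n, 1 ≤ n ∧ ∀ f : Fin n → R, (∀ i, f i ∈ rSingular R) →
      (List.ofFn f).prod = 0) :
    rSingular R ⊆ jacobsonSet R := by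
  obtain ⟨n, hn1, hn⟩ := hmw
  intro x hx
  show x ∈ TwoSidedIdeal.jacobson (⊥ : TwoSidedIdeal R)
  rw [TwoSidedIdeal.mem_jacobson_iff]
  intro y
  have hyx : y * x ∈ rSingular R := singular_mul_left hx y
  have hnil : IsNilpotent (y * x) := by
    refine ⟨n, ?_⟩
    have : (List.ofFn fun _ : Fin n => y * x).prod = 0 :=
      hn _ (fun _ => hyx)
    rwa [List.ofFn_const, List.prod_replicate] at this
  have hu : IsUnit (1 + y * x) := hnil.isUnit_one_add
  obtain ⟨u, hu⟩ := hu
  refine ⟨(↑u⁻¹ : R), ?_⟩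
  rw [TwoSidedIdeal.mem_bot]
  have h1 : (↑u⁻¹ : R) * (1 + y * x) = 1 := by rw [← hu]; exact u.inv_mul
  rw [sub_eq_zero, mul_assoc]
  calc (↑u⁻¹ : R) * (y * x) + ↑u⁻¹ = (↑u⁻¹ : R) * (1 + y * x) := by
        rw [mul_add, mul_one, add_comm]
    _ = 1 := h1

/-! ### Left socle -/

/-- The left socle of `R`. -/
def lSocle (R : Type*) [Ring R] : Submodule R R :=
  sSup {m : Submodule R R | IsSimpleModule R m}

lemma sSup_simples_semisimple {A M : Type*} [Ring A] [AddCommGroup M] [Module A M] :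
    IsSemisimpleModule A ↥(sSup {m : Submodule A M | IsSimpleModule A m}) := by
  have h := isSemisimpleModule_biSup_of_isSemisimpleModule_submodule
    (s := {m : Submodule A M | IsSimpleModule A m}) (p := fun m : Submodule A M => m)
    (fun m hm => by haveI : IsSimpleModule A ↥m := hm; infer_instance)
  rw [sSup_eq_iSup]
  exact h

lemma lSocle_semisimple : IsSemisimpleModule R ↥(lSocle R) := sSup_simples_semisimple

-- image of a simple submodule is ⊥ or simple
lemma map_simple_or_bot {A M N : Type*} [Ring A] [AddCommGroup M] [Module A M]
    [AddCommGroup N] [Module A N] (f : M →ₗ[A] N) {p : Submodule A M}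
    (hp : IsSimpleModule A p) :
    Submodule.map f p = ⊥ ∨ IsSimpleModule A (Submodule.map f p) := by
  haveI := hp
  set g : ↥p →ₗ[A] N := f.comp p.subtype with hg
  have hrange : LinearMap.range g = Submodule.map f p := by
    rw [hg, LinearMap.range_comp, Submodule.range_subtype]
  rcases eq_bot_or_eq_top (LinearMap.ker g) with hker | hker
  · right
    have hinj : Function.Injective g := LinearMap.ker_eq_bot.mp hker
    have e : ↥p ≃ₗ[A] ↥(LinearMap.range g) := LinearEquiv.ofInjective g hinj
    rw [← hrange]
    exact IsSimpleModule.congr e.symm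
  · left
    rw [← hrange, LinearMap.range_eq_bot]
    ext x
    have hx : x ∈ LinearMap.ker g := by rw [hker]; trivial
    simpa using hx

lemma lSocle_mul_mem {x : R} (hx : x ∈ lSocle R) (a : R) : x * a ∈ lSocle R := by
  set f : R →ₗ[R] R :=
    { toFun := fun t => t * a
      map_add' := fun s t => add_mul s t a
      map_smul' := fun r t => mul_assoc r t a } with hf
  have hle : lSocle R ≤ Submodule.comap f (lSocle R) := by
    apply sSup_le
    intro m hm
    rw [← Submodule.map_le_iff_le_comap]
    rcases map_simple_or_bot f hm with h | h
    · rw [h]; exact bot_le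
    · exact le_sSup h
  exact hle hx

/-- The right socle is contained in the left socle (for right mininjective rings). -/
lemma rSocle_subset_lSocle (hmin : IsRightMininjective R) {x : R}
    (hx : x ∈ rSocle R) : x ∈ lSocle R := by
  set U : RIdeal R :=
    { carrier := (lSocle R : Set R)
      add_mem' := fun h1 h2 => (lSocle R).add_mem h1 h2
      zero_mem' := (lSocle R).zero_mem
      smul_mem' := by
        intro c y hy
        show y * c.unop ∈ lSocle R
        exact lSocle_mul_mem hy c.unop } with hU
  have hle : rSocle R ≤ U := by
    apply sSup_le
    intro m hm
    intro y hy
    show y ∈ lSocle R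
    by_cases hy0 : y = 0
    · rw [hy0]; exact (lSocle R).zero_mem
    · have hsp : IsSimpleModule Rᵐᵒᵖ (Submodule.span Rᵐᵒᵖ {y}) := by
        rw [span_eq_of_mem_simple hm hy hy0]; exact hm
      have : IsSimpleModule R (Submodule.span R {y}) := Rk_simple hmin hsp
      have hle' : Submodule.span R {y} ≤ lSocle R :=
        le_sSup (show Submodule.span R {y} ∈ {m : Submodule R R | IsSimpleModule R m} from this)
      exact hle' (Submodule.mem_span_singleton_self y)
  exact hle hx

/-! ### Finite products of a semisimple module -/

lemma pi_semisimple {A M ι : Type*} [Ring A] [AddCommGroup M] [Module A M] [Finite ι]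
    [IsSemisimpleModule A M] : IsSemisimpleModule A (ι → M) := by
  classical
  refine isSemisimpleModule_of_isSemisimpleModule_submodule'
    (p := fun i : ι => LinearMap.range (LinearMap.single A (fun _ : ι => M) i))
    (fun i => ?_) (LinearMap.iSup_range_single A (fun _ : ι => M))
  have hinj : Function.Injective (LinearMap.single A (fun _ : ι => M) i) :=
    LinearMap.ker_eq_bot.mp (LinearMap.ker_single A _ i)
  exact IsSemisimpleModule.congr (LinearEquiv.ofInjective _ hinj).symm

end NY

end NYAux


/-- Right mininjective with ACC on right annihilators and essential right socle:
`R` is semiprimary (`J` nilpotent and `R/J` semisimple). -/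
theorem stmt15 {R : Type*} [Ring R] (hmin : IsRightMininjective R)
    (hacc : ACCOnRightAnnihilators R) (hess : IsEssentialRIdeal R (rSocle R)) :
    IsNilpotentSet R (jacobsonSet R) ∧
      ∀ I : TwoSidedIdeal R, (I : Set R) = jacobsonSet R →
        IsSemisimpleRing I.ringCon.Quotient := by
  classical
  have hmw := NY.MW hacc
  have hJZ : jacobsonSet R ⊆ rSingular R := fun a ha =>
    NY.lAnn_socle_subset_singular hess (fun s hs => NY.jacobson_mul_socle hmin ha hs)
  have hZJ : rSingular R ⊆ jacobsonSet R := NY.singular_subset_jacobson hmw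
  constructor
  · -- nilpotency of the Jacobson radical
    obtain ⟨n, hn1, hn⟩ := hmw
    obtain ⟨n', rfl⟩ : ∃ m, n = m + 1 := ⟨n - 1, by omega⟩
    exact ⟨n', fun f hf => hn f (fun i => hJZ (hf i))⟩
  · intro I hI
    set Sset : Set R := (rSocle R : Set R) with hSset
    have hJlS : jacobsonSet R ⊆ lAnn R Sset := fun a ha s hs =>
      NY.jacobson_mul_socle hmin ha hs
    have hlSJ : lAnn R Sset ⊆ jacobsonSet R := fun a ha =>
      hZJ (NY.lAnn_socle_subset_singular hess (fun s hs => ha s hs))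
    -- find a finite subset of the socle with the same left annihilator
    set G : Set (Set R) := {g | ∃ F : Finset R, ↑F ⊆ Sset ∧ g = rAnn R (lAnn R ↑F)}
      with hG
    obtain ⟨g₀, hg₀G, hg₀max⟩ := NY.acc_max hacc G
      (by rintro g ⟨F, hF, rfl⟩; exact ⟨_, rfl⟩)
      ⟨rAnn R (lAnn R (↑(∅ : Finset R) : Set R)), ∅, by simp, rfl⟩
    obtain ⟨F₀, hF₀S, rfl⟩ := hg₀G
    have hkey : ∀ s ∈ Sset, lAnn R (↑F₀ : Set R) ⊆ lAnn R {s} := by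
      intro s hs
      have h1 : (↑(insert s F₀) : Set R) ⊆ Sset := by
        rw [Finset.coe_insert]
        exact Set.insert_subset hs hF₀S
      have hsub : rAnn R (lAnn R (↑F₀ : Set R)) ⊆ rAnn R (lAnn R (↑(insert s F₀) : Set R)) :=
        NY.rAnn_antitone (NY.lAnn_antitone
          (by rw [Finset.coe_insert]; exact Set.subset_insert s ↑F₀))
      have heq := hg₀max _ ⟨insert s F₀, h1, rfl⟩ hsub
      have h2 : lAnn R (↑F₀ : Set R) = lAnn R (↑(insert s F₀) : Set R) := by
        conv_lhs => rw [← NY.lAnn_rAnn_lAnn (↑F₀ : Set R)]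
        conv_rhs => rw [← NY.lAnn_rAnn_lAnn (↑(insert s F₀) : Set R)]
        rw [heq]
      rw [h2]
      apply NY.lAnn_antitone
      intro x hx
      rw [Set.mem_singleton_iff] at hx
      subst hx
      rw [Finset.coe_insert]
      exact Set.mem_insert _ _
    have hJF : jacobsonSet R = lAnn R (↑F₀ : Set R) := by
      apply Set.Subset.antisymm
      · exact fun a ha => NY.lAnn_antitone hF₀S (hJlS ha)
      · intro a ha
        apply hlSJ
        intro s hs
        exact hkey s hs ha s rfl
    -- build the quotient ring and transfer semisimplicity
    let Q := I.ringCon.Quotient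
    let π : R →+* Q :=
      { toFun := fun a => (a : Q)
        map_one' := rfl
        map_mul' := fun _ _ => rfl
        map_zero' := rfl
        map_add' := fun _ _ => rfl }
    have hπs : Function.Surjective π := fun q => Quotient.inductionOn' q (fun a => ⟨a, rfl⟩)
    letI : Module R Q := Module.compHom Q π
    haveI hLS : IsSemisimpleModule R ↥(NY.lSocle R) := NY.lSocle_semisimple
    haveI hPi : IsSemisimpleModule R (↥F₀ → ↥(NY.lSocle R)) := NY.pi_semisimple
    have hmemLS : ∀ s ∈ Sset, ∀ a : R, a * s ∈ NY.lSocle R := fun s hs a =>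
      Submodule.smul_mem _ a (NY.rSocle_subset_lSocle hmin hs)
    let χ₀ : R →ₗ[R] (↥F₀ → ↥(NY.lSocle R)) :=
      { toFun := fun a => fun i => ⟨a * (i : R), hmemLS _ (hF₀S i.2) a⟩
        map_add' := fun a b => funext fun i => Subtype.ext (add_mul a b _)
        map_smul' := fun r a => funext fun i => Subtype.ext (by
          show (r • a) * (i : R) = r * (a * (i : R))
          rw [smul_eq_mul, mul_assoc]) }
    have hlift : ∀ a b : R, I.ringCon a b → χ₀ a = χ₀ b := by
      intro a b hab
      have hmem : a - b ∈ I := (TwoSidedIdeal.rel_iff I a b).mp hab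
      have hmem' : a - b ∈ lAnn R (↑F₀ : Set R) := by
        rw [← hJF, ← hI]
        exact hmem
      funext i
      apply Subtype.ext
      show a * (i : R) = b * (i : R)
      have h3 := hmem' (i : R) i.2
      rw [sub_mul] at h3
      exact sub_eq_zero.mp h3
    let χfun : Q → (↥F₀ → ↥(NY.lSocle R)) := Quotient.lift χ₀ hlift
    let χ : Q →ₗ[R] (↥F₀ → ↥(NY.lSocle R)) :=
      { toFun := χfun
        map_add' := fun q q' => Quotient.inductionOn₂' q q' (fun a b => by
          show χ₀ (a + b) = χ₀ a + χ₀ b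
          exact χ₀.map_add a b)
        map_smul' := fun r q => Quotient.inductionOn' q (fun a => by
          show χ₀ (r * a) = r • χ₀ a
          have h4 := χ₀.map_smul r a
          rwa [smul_eq_mul] at h4) }
    have hχinj : Function.Injective χ := by
      intro q q'
      refine Quotient.inductionOn₂' q q' (fun a b h => ?_)
      have hab : ∀ i : ↥F₀, a * (i : R) = b * (i : R) := fun i =>
        congrArg Subtype.val (congrFun (h : χ₀ a = χ₀ b) i)
      have hmem : a - b ∈ lAnn R (↑F₀ : Set R) := by
        intro x hx
        rw [sub_mul, hab ⟨x, hx⟩]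
        exact sub_self _
      have hmI : a - b ∈ I := by
        rw [← SetLike.mem_coe, hI, hJF]
        exact hmem
      exact Quotient.sound' ((TwoSidedIdeal.rel_iff I a b).mpr hmI)
    haveI hQss : IsSemisimpleModule R Q :=
      IsSemisimpleModule.congr (LinearEquiv.ofInjective χ hχinj)
    haveI : RingHomSurjective π := ⟨hπs⟩
    let eQ : Q →ₛₗ[π] Q :=
      { toFun := id, map_add' := fun _ _ => rfl, map_smul' := fun _ _ => rfl }
    exact (eQ.isSemisimpleModule_iff_of_bijective Function.bijective_id).mp hQss
end

section
/- Let R = End(V_k) where V is an infinite-dimensional right vector space over a division ring k, and let S = M_2(R). Then S is von Neumann regular with zero Jacobson radical, every nonzero complement left ideal of S is not small, but S is not a left CS ring. -/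
section Stmt18Aux


lemma end_regular {K W : Type*} [DivisionRing K] [AddCommGroup W] [Module K W]
    (g : Module.End K W) : ∃ h : Module.End K W, g = g * h * g := by
  obtain ⟨C, hC⟩ := (LinearMap.range g).exists_isCompl
  let proj := Submodule.linearProjOfIsCompl _ _ hC
  obtain ⟨s, hs⟩ := g.rangeRestrict.exists_rightInverse_of_surjective
    (LinearMap.range_rangeRestrict g)
  refine ⟨s ∘ₗ (proj : W →ₗ[K] LinearMap.range g), ?_⟩
  ext w
  have h1 : proj (g w) = ⟨g w, LinearMap.mem_range_self g w⟩ :=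
    Submodule.linearProjOfIsCompl_apply_left hC ⟨g w, LinearMap.mem_range_self g w⟩
  have h2 : g.rangeRestrict (s ⟨g w, LinearMap.mem_range_self g w⟩)
      = ⟨g w, LinearMap.mem_range_self g w⟩ := by
    rw [← LinearMap.comp_apply, hs, LinearMap.id_apply]
  have h3 : g (s ⟨g w, LinearMap.mem_range_self g w⟩) = g w := congrArg Subtype.val h2
  simp only [Module.End.mul_apply, LinearMap.comp_apply, h1, h3]


lemma mat_regular (k : Type*) [DivisionRing k] (V : Type*) [AddCommGroup V]
    [Module kᵐᵒᵖ V] (x : Matrix (Fin 2) (Fin 2) (Module.End kᵐᵒᵖ V)) :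
    ∃ y, x = x * y * x := by
  let Φ := endVecRingEquivMatrixEnd (Fin 2) kᵐᵒᵖ V
  obtain ⟨h, hh⟩ := end_regular (Φ.symm x)
  refine ⟨Φ h, Φ.symm.injective ?_⟩
  simp only [map_mul, RingEquiv.symm_apply_apply]
  exact hh


lemma idem_left_inv {S : Type*} [Ring S] {z e : S} (h1 : z * (1 - e) = 1)
    (hee : e * e = e) : e = 0 := by
  have h2 : (z * (1 - e)) * e = e := by rw [h1, one_mul]
  rw [mul_assoc, sub_mul, one_mul, hee, sub_self, mul_zero] at h2
  exact h2.symm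

lemma jac_zero {S : Type*} [Ring S] (hreg : ∀ x : S, ∃ y, x = x * y * x) :
    jacobsonSet S = {0} := by
  ext x
  simp only [Set.mem_singleton_iff, jacobsonSet, SetLike.mem_coe,
    TwoSidedIdeal.mem_jacobson_iff, TwoSidedIdeal.mem_bot]
  constructor
  · intro hx
    obtain ⟨w, hw⟩ := hreg x
    obtain ⟨z, hz⟩ := hx (-w)
    have h := sub_eq_zero.mp hz
    have h1 : z * (1 - w * x) = 1 := by
      rw [mul_sub, mul_one, ← h]; noncomm_ring
    have hee : (w * x) * (w * x) = w * x := by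
      conv_lhs => rw [mul_assoc, ← mul_assoc x w x, ← hw]
    have he0 := idem_left_inv h1 hee
    calc x = x * w * x := hw
    _ = x * (w * x) := by rw [mul_assoc]
    _ = 0 := by rw [he0, mul_zero]
  · rintro rfl
    exact fun y => ⟨1, by simp⟩

lemma not_small {S : Type*} [Ring S] (hreg : ∀ x : S, ∃ y, x = x * y * x)
    (C : Ideal S) (hC : C ≠ ⊥) : ¬ IsSmallLeftIdeal S C := by
  intro hsm
  obtain ⟨a, haC, ha0⟩ := Submodule.exists_mem_ne_zero_of_ne_bot hC
  obtain ⟨y, hy⟩ := hreg a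
  have heC : y * a ∈ C := C.smul_mem y haC
  have hae : a * (y * a) = a := by rw [← mul_assoc, ← hy]
  have hee : (y * a) * (y * a) = y * a := by
    conv_lhs => rw [mul_assoc, ← mul_assoc a y a, ← hy]
  have hKtop : Ideal.span {1 - y * a} ⊔ C = ⊤ := by
    rw [Ideal.eq_top_iff_one]
    have hmem : (1 - y * a) + y * a ∈ Ideal.span {1 - y * a} ⊔ C :=
      Submodule.add_mem_sup (Ideal.subset_span rfl) heC
    simpa using hmem
  have hK := hsm _ hKtop
  rw [Ideal.eq_top_iff_one] at hK
  obtain ⟨z, hz⟩ := Submodule.mem_span_singleton.mp hK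
  have he0 : y * a = 0 := idem_left_inv hz hee
  exact ha0 (by rw [← hae, he0, mul_zero])


lemma cs_extension {R : Type*} [Ring R]
    (hreg : ∀ x : Matrix (Fin 2) (Fin 2) R, ∃ y, x = x * y * x)
    (hCS : IsLeftCS (Matrix (Fin 2) (Fin 2) R))
    (L : Ideal R) (φ : R → R) (h0 : φ 0 = 0)
    (hadd : ∀ a ∈ L, ∀ b ∈ L, φ (a + b) = φ a + φ b)
    (hsmul : ∀ (x : R), ∀ a ∈ L, φ (x * a) = x * φ a) :
    ∃ c : R, ∀ a ∈ L, φ a = a * c := by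
  classical
  have mul_ent : ∀ (X A : Matrix (Fin 2) (Fin 2) R) (i j : Fin 2),
      (X * A) i j = X i 0 * A 0 j + X i 1 * A 1 j := by
    intro X A i j; rw [Matrix.mul_apply, Fin.sum_univ_two]
  -- the graph ideal
  let G : Ideal (Matrix (Fin 2) (Fin 2) R) :=
  { carrier := {A | A 0 0 ∈ L ∧ A 1 0 ∈ L ∧ A 0 1 = φ (A 0 0) ∧ A 1 1 = φ (A 1 0)}
    add_mem' := by
      rintro A B ⟨hA1, hA2, hA3, hA4⟩ ⟨hB1, hB2, hB3, hB4⟩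
      refine ⟨L.add_mem hA1 hB1, L.add_mem hA2 hB2, ?_, ?_⟩ <;>
        simp only [Matrix.add_apply, hA3, hB3, hA4, hB4]
      · exact (hadd _ hA1 _ hB1).symm
      · exact (hadd _ hA2 _ hB2).symm
    zero_mem' := ⟨L.zero_mem, L.zero_mem, by simp [h0], by simp [h0]⟩
    smul_mem' := by
      intro X A hA
      obtain ⟨hA1, hA2, hA3, hA4⟩ := hA
      have hmul : ∀ (x : R) {a : R}, a ∈ L → x * a ∈ L := fun x a ha => L.smul_mem x ha
      have hL : ∀ i : Fin 2, X i 0 * A 0 0 + X i 1 * A 1 0 ∈ L := fun i =>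
        L.add_mem (hmul _ hA1) (hmul _ hA2)
      refine ⟨?_, ?_, ?_, ?_⟩
      · show (X * A) 0 0 ∈ L; rw [mul_ent]; exact hL 0
      · show (X * A) 1 0 ∈ L; rw [mul_ent]; exact hL 1
      · show (X * A) 0 1 = φ ((X * A) 0 0)
        rw [mul_ent, mul_ent, hA3, hA4,
          ← hsmul (X 0 0) _ hA1, ← hsmul (X 0 1) _ hA2,
          ← hadd _ (hmul _ hA1) _ (hmul _ hA2)]
      · show (X * A) 1 1 = φ ((X * A) 1 0)
        rw [mul_ent, mul_ent, hA3, hA4,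
          ← hsmul (X 1 0) _ hA1, ← hsmul (X 1 1) _ hA2,
          ← hadd _ (hmul _ hA1) _ (hmul _ hA2)] }
  -- the second-column ideal
  let N : Ideal (Matrix (Fin 2) (Fin 2) R) :=
  { carrier := {A | A 0 0 = 0 ∧ A 1 0 = 0}
    add_mem' := by
      rintro A B ⟨hA1, hA2⟩ ⟨hB1, hB2⟩
      constructor <;> simp only [Matrix.add_apply, hA1, hA2, hB1, hB2, add_zero]
    zero_mem' := ⟨rfl, rfl⟩
    smul_mem' := by
      rintro X A ⟨hA1, hA2⟩
      constructor
      · show (X * A) 0 0 = 0; rw [mul_ent, hA1, hA2, mul_zero, mul_zero, add_zero]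
      · show (X * A) 1 0 = 0; rw [mul_ent, hA1, hA2, mul_zero, mul_zero, add_zero] }
  have hGmem : ∀ A, A ∈ G ↔ (A 0 0 ∈ L ∧ A 1 0 ∈ L ∧ A 0 1 = φ (A 0 0) ∧ A 1 1 = φ (A 1 0)) :=
    fun A => Iff.rfl
  have hNmem : ∀ A, A ∈ N ↔ (A 0 0 = 0 ∧ A 1 0 = 0) := fun A => Iff.rfl
  have hGN : ∀ A, A ∈ G → A ∈ N → A = 0 := by
    intro A hG hN
    obtain ⟨h1, h2, h3, h4⟩ := hG
    obtain ⟨h5, h6⟩ := hN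
    ext i j
    fin_cases i <;> fin_cases j <;>
      simp only [Matrix.zero_apply, Fin.zero_eta, Fin.mk_one]
    · exact h5
    · rw [h3, h5, h0]
    · exact h6
    · rw [h4, h6, h0]
  obtain ⟨K, ⟨K', hKK'⟩, hGK, hess⟩ := hCS G
  -- K is generated by an element u with s * u = s for all s ∈ K
  have h1top : (1 : Matrix (Fin 2) (Fin 2) R) ∈ K ⊔ K' := by
    rw [hKK'.sup_eq_top]; trivial
  obtain ⟨u, huK, u', hu'K', huu⟩ := Submodule.mem_sup.mp h1top
  have hmulK : ∀ (s : Matrix (Fin 2) (Fin 2) R) {a}, a ∈ K → s * a ∈ K :=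
    fun s a ha => K.smul_mem s ha
  have hmulK' : ∀ (s : Matrix (Fin 2) (Fin 2) R) {a}, a ∈ K' → s * a ∈ K' :=
    fun s a ha => K'.smul_mem s ha
  have hKu : ∀ s ∈ K, s * u = s := by
    intro s hs
    have h1 : s * u + s * u' = s := by rw [← mul_add, huu, mul_one]
    have h2 : s * u' ∈ K := by
      have h2' : s * u' = s - s * u := eq_sub_of_add_eq' h1
      rw [h2']; exact K.sub_mem hs (hmulK s huK)
    have h3 : s * u' ∈ K ⊓ K' := ⟨h2, hmulK' s hu'K'⟩
    rw [hKK'.inf_eq_bot] at h3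
    have h4 : s * u' = 0 := h3
    rw [h4, add_zero] at h1
    exact h1
  -- K ∩ N = 0
  have hKN : ∀ A, A ∈ K → A ∈ N → A = 0 := by
    intro A hK hN
    have hb : K ⊓ N = ⊥ := by
      apply hess (K ⊓ N) inf_le_left
      rw [Submodule.eq_bot_iff]
      rintro A ⟨⟨_, hN⟩, hG⟩
      exact hGN A hG hN
    have : A ∈ K ⊓ N := ⟨hK, hN⟩
    rw [hb] at this
    exact this
  -- the idempotent-like elements e1 e2
  set e1 : Matrix (Fin 2) (Fin 2) R := Matrix.of ![![1, 0], ![0, 0]] with he1def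
  set e2 : Matrix (Fin 2) (Fin 2) R := Matrix.of ![![0, 0], ![0, 1]] with he2def
  have hcol1 : ∀ (A : Matrix (Fin 2) (Fin 2) R) (i : Fin 2),
      (A * e1) i 0 = A i 0 ∧ (A * e1) i 1 = 0 := by
    intro A i
    constructor <;> rw [mul_ent] <;>
      simp [he1def]
  have hcol2 : ∀ (A : Matrix (Fin 2) (Fin 2) R) (i : Fin 2),
      (A * e2) i 0 = 0 ∧ (A * e2) i 1 = A i 1 := by
    intro A i
    constructor <;> rw [mul_ent] <;>
      simp [he2def]
  have hsplitA : ∀ A : Matrix (Fin 2) (Fin 2) R, A * e1 + A * e2 = A := by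
    intro A
    ext i j
    rw [Matrix.add_apply]
    fin_cases j
    · show (A * e1) i 0 + (A * e2) i 0 = A i 0
      rw [(hcol1 A i).1, (hcol2 A i).1, add_zero]
    · show (A * e1) i 1 + (A * e2) i 1 = A i 1
      rw [(hcol1 A i).2, (hcol2 A i).2, zero_add]
  have hNe2 : ∀ A : Matrix (Fin 2) (Fin 2) R, A * e2 ∈ N :=
    fun A => ⟨(hcol2 A 0).1, (hcol2 A 1).1⟩
  have hNmul : ∀ A ∈ N, A * e1 = 0 := by
    rintro A ⟨h1, h2⟩
    ext i j
    rw [Matrix.zero_apply]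
    fin_cases j
    · show (A * e1) i 0 = 0
      rw [(hcol1 A i).1]; fin_cases i
      · exact h1
      · exact h2
    · exact (hcol1 A i).2
  have he11 : e1 * e1 = e1 := by
    ext i j
    fin_cases j
    · exact (hcol1 e1 i).1
    · show (e1 * e1) i 1 = e1 i 1
      rw [(hcol1 e1 i).2]
      fin_cases i <;> simp [he1def, Fin.zero_eta, Fin.mk_one]
  -- regular decomposition of u * e1
  obtain ⟨y, hy⟩ := hreg (u * e1)
  have hae1 : (u * e1) * e1 = u * e1 := by rw [mul_assoc, he11]
  have hεe1 : (y * (u * e1)) * e1 = y * (u * e1) := by rw [mul_assoc, hae1]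
  have hεε : (y * (u * e1)) * (y * (u * e1)) = y * (u * e1) := by
    conv_lhs => rw [mul_assoc, ← mul_assoc (u * e1) y (u * e1), ← hy]
  have haε : (u * e1) * (y * (u * e1)) = u * e1 := by
    rw [← mul_assoc, ← hy]
  set ε : Matrix (Fin 2) (Fin 2) R := y * (u * e1) with hεdef
  let Q : Ideal (Matrix (Fin 2) (Fin 2) R) :=
  { carrier := {A | A * ε = 0 ∧ A * e1 = A}
    add_mem' := by
      rintro A B ⟨h1, h2⟩ ⟨h3, h4⟩
      exact ⟨by rw [add_mul, h1, h3, add_zero], by rw [add_mul, h2, h4]⟩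
    zero_mem' := ⟨zero_mul _, zero_mul _⟩
    smul_mem' := by
      rintro c A ⟨h1, h2⟩
      exact ⟨show c * A * ε = 0 by rw [mul_assoc, h1, mul_zero],
        show c * A * e1 = c * A by rw [mul_assoc, h2]⟩ }
  have hQmem : ∀ A, A ∈ Q ↔ (A * ε = 0 ∧ A * e1 = A) := fun A => Iff.rfl
  -- S = K + N + Q
  have hmemtop : ∀ A : Matrix (Fin 2) (Fin 2) R, A ∈ K ⊔ (N ⊔ Q) := by
    intro A
    have hkey : (A * e1) * ε = ((A * e1 * y) * u) * e1 := by
      rw [hεdef, ← mul_assoc, ← mul_assoc]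
    have hT2 : A * e1 - (A * e1) * ε ∈ Q := by
      constructor
      · rw [sub_mul, mul_assoc (A * e1) ε ε, hεε, sub_self]
      · rw [sub_mul, mul_assoc A e1 e1, he11, mul_assoc (A * e1) ε e1, hεe1]
    have hD : (A * e1 * y) * u ∈ K := hmulK _ huK
    have halg : ((A * e1 * y) * u) +
        ((A * e2 - ((A * e1 * y) * u) * e2) + (A * e1 - (A * e1) * ε)) = A := by
      rw [hkey]
      have h5 := hsplitA A
      have h6 := hsplitA ((A * e1 * y) * u)
      calc ((A * e1 * y) * u) + ((A * e2 - ((A * e1 * y) * u) * e2)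
              + (A * e1 - ((A * e1 * y) * u) * e1))
          = (((A * e1 * y) * u) - (((A * e1 * y) * u) * e1 + ((A * e1 * y) * u) * e2))
            + (A * e1 + A * e2) := by abel
        _ = A := by rw [h6, sub_self, zero_add, h5]
    rw [← halg]
    exact Submodule.add_mem_sup hD
      (Submodule.add_mem_sup (N.sub_mem (hNe2 A) (hNe2 _)) hT2)
  -- (K + N) ∩ Q = 0
  have hKNQ : ∀ A, A ∈ K ⊔ N → A ∈ Q → A = 0 := by
    intro A hsup hQ
    obtain ⟨x, hx, n, hn, hxn⟩ := Submodule.mem_sup.mp hsup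
    obtain ⟨hQ1, hQ2⟩ := hQ
    have h1 : A = x * e1 := by
      rw [← hQ2, ← hxn, add_mul, hNmul n hn, add_zero]
    have h2 : A * ε = A := by
      rw [h1, ← hKu x hx, mul_assoc x u e1, mul_assoc x (u * e1) ε, haε]
    rw [hQ1] at h2
    exact h2.symm
  -- decompose 1
  obtain ⟨κ, hκ, w1, hw1, hsum1⟩ := Submodule.mem_sup.mp (hmemtop 1)
  obtain ⟨ν, hν, q, hq, hsum2⟩ := Submodule.mem_sup.mp hw1
  -- conclusion
  refine ⟨-(ν 0 1), ?_⟩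
  intro g hg
  set gM : Matrix (Fin 2) (Fin 2) R := Matrix.of ![![g, φ g], ![0, 0]] with hgMdef
  set nM : Matrix (Fin 2) (Fin 2) R := Matrix.of ![![0, φ g], ![0, 0]] with hnMdef
  set aM : Matrix (Fin 2) (Fin 2) R := Matrix.of ![![g, 0], ![0, 0]] with haMdef
  have hgG : gM ∈ G := by
    refine ⟨?_, ?_, ?_, ?_⟩ <;> simp [hgMdef, h0, hg]
  have hnN : nM ∈ N := by
    constructor <;> simp [hnMdef]
  have hanM : aM = gM - nM := by
    ext i j
    fin_cases i <;> fin_cases j <;> simp [haMdef, hgMdef, hnMdef]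
  have hsumA : aM * κ + (aM * ν + aM * q) = aM := by
    rw [← mul_add, ← mul_add, hsum2, hsum1, mul_one]
  -- uniqueness of decomposition
  have hX : gM - aM * κ ∈ K := K.sub_mem (hGK hgG) (hmulK _ hκ)
  have hY : -nM - aM * ν ∈ N := N.sub_mem (N.neg_mem hnN) (N.smul_mem _ hν)
  have hZ : -(aM * q) ∈ Q := Q.neg_mem (Q.smul_mem _ hq)
  have hXYZ : (gM - aM * κ) + (-nM - aM * ν) + (-(aM * q)) = 0 := by
    have : gM - nM = aM * κ + (aM * ν + aM * q) := by rw [hsumA, hanM]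
    calc (gM - aM * κ) + (-nM - aM * ν) + (-(aM * q))
        = (gM - nM) - (aM * κ + (aM * ν + aM * q)) := by abel
    _ = 0 := by rw [← this]; abel
  have hXYeq : (gM - aM * κ) + (-nM - aM * ν) = aM * q := by
    rwa [add_neg_eq_zero] at hXYZ
  have hmemsup : aM * q ∈ K ⊔ N := by
    rw [← hXYeq]; exact Submodule.add_mem_sup hX hY
  have hq0 : aM * q = 0 := hKNQ _ hmemsup (Q.smul_mem _ hq)
  have hXY : (gM - aM * κ) + (-nM - aM * ν) = 0 := hXYeq.trans hq0
  have hXmem : gM - aM * κ ∈ N := by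
    rw [eq_neg_of_add_eq_zero_left hXY]
    exact N.neg_mem hY
  have hX0 : gM - aM * κ = 0 := hKN _ hX hXmem
  have hY0 : -nM - aM * ν = 0 := by
    rw [hX0, zero_add] at hXY
    exact hXY
  have hfin : aM * ν = -nM := by
    rw [sub_eq_zero] at hY0
    exact hY0.symm
  have hent := congrFun (congrFun hfin 0) 1
  rw [mul_ent] at hent
  have ha00 : aM 0 0 = g := by simp [haMdef]
  have ha01 : aM 0 1 = 0 := by simp [haMdef]
  have hn01 : (-nM) 0 1 = -(φ g) := by simp [hnMdef]
  rw [ha00, ha01, zero_mul, add_zero, hn01] at hent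
  rw [mul_neg, hent, neg_neg]


lemma not_cs (k : Type*) [DivisionRing k] (V : Type*) [AddCommGroup V]
    [Module kᵐᵒᵖ V] (hinf : ¬ Module.Finite kᵐᵒᵖ V) :
    ¬ IsLeftCS (Matrix (Fin 2) (Fin 2) (Module.End kᵐᵒᵖ V)) := by
  intro hCS
  classical
  let b := Module.Basis.ofVectorSpace kᵐᵒᵖ V
  have hinfι : Infinite (Module.Basis.ofVectorSpaceIndex kᵐᵒᵖ V) := by
    by_contra h
    rw [not_infinite_iff_finite] at h
    exact hinf (Module.Finite.of_basis b)
  let f : ℕ ↪ (Module.Basis.ofVectorSpaceIndex kᵐᵒᵖ V) := Infinite.natEmbedding _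
  let L : Ideal (Module.End kᵐᵒᵖ V) :=
  { carrier := {g | ({m : ℕ | g (b (f m)) ≠ 0}).Finite}
    add_mem' := by
      intro g h hg hh
      apply Set.Finite.subset (hg.union hh)
      intro m hm
      simp only [Set.mem_setOf_eq] at hm
      rw [Set.mem_union]
      by_contra hc
      push_neg at hc
      obtain ⟨h1, h2⟩ := hc
      simp only [Set.mem_setOf_eq, not_not] at h1 h2
      exact hm (by rw [LinearMap.add_apply, h1, h2, add_zero])
    zero_mem' := by
      apply Set.Finite.subset Set.finite_empty
      intro m hm
      simp only [Set.mem_setOf_eq, LinearMap.zero_apply, ne_eq, not_true_eq_false] at hm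
    smul_mem' := by
      intro c g hg
      apply Set.Finite.subset hg
      intro m hm
      simp only [Set.mem_setOf_eq] at hm ⊢
      intro hz
      apply hm
      show (c * g) (b (f m)) = 0
      rw [Module.End.mul_apply, hz, map_zero] }
  have hLmem : ∀ g, g ∈ L ↔ ({m : ℕ | g (b (f m)) ≠ 0}).Finite := fun g => Iff.rfl
  let φ : Module.End kᵐᵒᵖ V → Module.End kᵐᵒᵖ V := fun g =>
  { toFun := fun v => (b.repr v (f 0)) • (∑ᶠ m, g (b (f m)))
    map_add' := by intro v w; rw [map_add, Finsupp.add_apply, add_smul]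
    map_smul' := by
      intro c v
      simp only [map_smul, Finsupp.smul_apply, smul_eq_mul, RingHom.id_apply, mul_smul] }
  have hφdef : ∀ g v, φ g v = (b.repr v (f 0)) • (∑ᶠ m, g (b (f m))) := fun g v => rfl
  have hsupp : ∀ g, g ∈ L → (Function.support fun m => g (b (f m))).Finite := fun g hg => hg
  have h0 : φ 0 = 0 := by
    ext v
    rw [hφdef, LinearMap.zero_apply]
    have : (∑ᶠ m : ℕ, (0 : Module.End kᵐᵒᵖ V) (b (f m))) = 0 := by
      simp only [LinearMap.zero_apply, finsum_zero]
    rw [this, smul_zero]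
  have hadd : ∀ a ∈ L, ∀ c ∈ L, φ (a + c) = φ a + φ c := by
    intro a ha c hc
    ext v
    rw [LinearMap.add_apply, hφdef, hφdef, hφdef, ← smul_add]
    congr 1
    have : (fun m => (a + c) (b (f m))) = fun m => a (b (f m)) + c (b (f m)) := by
      funext m; rw [LinearMap.add_apply]
    rw [this, finsum_add_distrib (hsupp a ha) (hsupp c hc)]
  have hsmul : ∀ (x : Module.End kᵐᵒᵖ V), ∀ a ∈ L, φ (x * a) = x * φ a := by
    intro x a ha
    ext v
    rw [Module.End.mul_apply, hφdef, hφdef, map_smul]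
    congr 1
    have h1 : (fun m => (x * a) (b (f m))) = fun m => x (a (b (f m))) := by
      funext m; rw [Module.End.mul_apply]
    rw [h1]
    have h2 := AddMonoidHom.map_finsum x.toAddMonoidHom (hsupp a ha)
    simpa using h2.symm
  obtain ⟨c, hc⟩ := cs_extension (mat_regular k V) hCS L φ h0 hadd hsmul
  -- the rank-one idempotents
  let e : ℕ → Module.End kᵐᵒᵖ V := fun n =>
  { toFun := fun v => (b.repr v (f n)) • b (f n)
    map_add' := by intro v w; rw [map_add, Finsupp.add_apply, add_smul]
    map_smul' := by
      intro cc v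
      simp only [map_smul, Finsupp.smul_apply, smul_eq_mul, RingHom.id_apply, mul_smul] }
  have hedef : ∀ n v, e n v = (b.repr v (f n)) • b (f n) := fun n v => rfl
  have heval : ∀ n m, m ≠ n → e n (b (f m)) = 0 := by
    intro n m hmn
    rw [hedef, Module.Basis.repr_self, Finsupp.single_apply,
      if_neg (fun hh => hmn (f.injective hh)), zero_smul]
  have hevaln : ∀ n, e n (b (f n)) = b (f n) := by
    intro n
    rw [hedef, Module.Basis.repr_self, Finsupp.single_eq_same, one_smul]
  have heL : ∀ n, e n ∈ L := by
    intro n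
    rw [hLmem]
    apply Set.Finite.subset (Set.finite_singleton n)
    intro m hm
    simp only [Set.mem_setOf_eq] at hm
    rw [Set.mem_singleton_iff]
    by_contra hmn
    exact hm (heval n m hmn)
  have hkey : ∀ n, (b.repr (c (b (f 0)))) (f n) = 1 := by
    intro n
    have h1 := congrFun (congrArg DFunLike.coe (hc (e n) (heL n))) (b (f 0))
    have h2 : (φ (e n)) (b (f 0)) = b (f n) := by
      rw [hφdef, Module.Basis.repr_self, Finsupp.single_eq_same, one_smul]
      rw [finsum_eq_single _ n (fun m hmn => heval n m hmn)]
      exact hevaln n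
    have h3 : ((e n) * c) (b (f 0)) = (b.repr (c (b (f 0))) (f n)) • b (f n) := by
      rw [Module.End.mul_apply, hedef]
    have h4 : b (f n) = (b.repr (c (b (f 0))) (f n)) • b (f n) := by
      rw [h2, h3] at h1
      exact h1
    have h5 := congrArg (fun v => (b.repr v) (f n)) h4
    simpa [Module.Basis.repr_self, Finsupp.single_eq_same] using h5.symm
  have hsub : Set.range (fun n : ℕ => f n) ⊆ ↑(b.repr (c (b (f 0)))).support := by
    rintro _ ⟨n, rfl⟩
    rw [Finset.mem_coe, Finsupp.mem_support_iff, hkey n]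
    exact one_ne_zero
  have hfin : (Set.range (fun n : ℕ => f n)).Finite :=
    Set.Finite.subset (Finset.finite_toSet _) hsub
  exact Set.infinite_range_of_injective f.injective hfin

end Stmt18Aux

/-- For `S = M₂(End(V_k))` with `V` an infinite-dimensional right `k`-vector space:
`S` is von Neumann regular with zero Jacobson radical, every nonzero complement left
ideal of `S` is not small, but `S` is not left CS. -/
theorem stmt18 (k : Type*) [DivisionRing k] (V : Type*) [AddCommGroup V]
    [Module kᵐᵒᵖ V] (hinf : ¬ Module.Finite kᵐᵒᵖ V) :
    (∀ x : Matrix (Fin 2) (Fin 2) (Module.End kᵐᵒᵖ V),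
        ∃ y, x = x * y * x) ∧
    jacobsonSet (Matrix (Fin 2) (Fin 2) (Module.End kᵐᵒᵖ V)) = {0} ∧
    (∀ C : Ideal (Matrix (Fin 2) (Fin 2) (Module.End kᵐᵒᵖ V)),
        IsComplementLeftIdeal _ C → C ≠ ⊥ → ¬ IsSmallLeftIdeal _ C) ∧
    ¬ IsLeftCS (Matrix (Fin 2) (Fin 2) (Module.End kᵐᵒᵖ V)) := by
  have hreg := mat_regular k V
  exact ⟨hreg, jac_zero hreg, fun C _ hC0 _hsm => not_small hreg C hC0 _hsm,
    not_cs k V hinf⟩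
end
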